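/- For a > 0 and b ≠ 0, the Gaussian states T₁ = |φ_{a,b}⟩⟨φ_{a,b}| and T₂ = |φ_{a,−b}⟩⟨φ_{a,−b}| are distinct, yet |φ_{a,b}(q)| = |φ_{a,−b}(q)| for all q and |φ̂_{a,b}(p)| = |φ̂_{a,−b}(p)| for all p. -/
import Mathlib


/-- The Gaussian `φ_{a,b}(q) = (2a/π)^{1/4} e^{-(a+ib)q²}`. -/
noncomputable def phiG (a b : ℝ) (q : ℝ) : ℂ :=
  (((2 * a / Real.pi) ^ ((1 : ℝ) / 4) : ℝ) : ℂ) * Complex.exp (-(a + b * Complex.I) * (q : ℂ) ^ 2)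

/-- The Fourier transform with convention `φ̂(p) = (2π)^{-1/2} ∫ e^{-ipq} φ(q) dq`. -/
noncomputable def fourierT (φ : ℝ → ℂ) (p : ℝ) : ℂ :=
  ((((2 * Real.pi) ^ (-(1 : ℝ) / 2) : ℝ)) : ℂ) *
    ∫ q : ℝ, Complex.exp (-(p * q) * Complex.I) * φ q

open Complex MeasureTheory

lemma phiG_neg_b (a b q : ℝ) : phiG a (-b) q = (starRingEnd ℂ) (phiG a b q) := by
  simp only [phiG, map_mul, ← Complex.exp_conj, map_neg, map_add, map_pow,
    Complex.conj_ofReal, map_mul, Complex.conj_I]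
  push_cast
  ring_nf

lemma phiG_even (a b q : ℝ) : phiG a b (-q) = phiG a b q := by
  simp [phiG]

lemma fourierT_conj (φ : ℝ → ℂ) (hφ : ∀ q, φ (-q) = φ q) (p : ℝ) :
    fourierT (fun q => (starRingEnd ℂ) (φ q)) p = (starRingEnd ℂ) (fourierT φ p) := by
  unfold fourierT
  rw [map_mul, Complex.conj_ofReal, ← integral_conj]
  rw [← MeasureTheory.integral_neg_eq_self
    (fun q : ℝ => Complex.exp (-(↑p * ↑q) * Complex.I) * (starRingEnd ℂ) (φ q))]
  congr 1
  apply integral_congr_ae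
  apply Filter.Eventually.of_forall
  intro q
  simp only [map_mul, ← Complex.exp_conj, map_neg, Complex.conj_I, Complex.conj_ofReal,
    map_mul, hφ]
  push_cast
  ring_nf

/-- For `a > 0`, `b ≠ 0`, the pure states `T₁ = |φ_{a,b}⟩⟨φ_{a,b}|` and
`T₂ = |φ_{a,−b}⟩⟨φ_{a,−b}|` are distinct (their integral kernels
`(x,y) ↦ φ(x)·conj(φ(y))` differ), yet `|φ_{a,b}| = |φ_{a,−b}|` pointwise and
`|φ̂_{a,b}| = |φ̂_{a,−b}|` pointwise. -/
theorem stmt9 (a b : ℝ) (ha : 0 < a) (hb : b ≠ 0) :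
    (¬ ∀ x y : ℝ, phiG a b x * (starRingEnd ℂ) (phiG a b y)
        = phiG a (-b) x * (starRingEnd ℂ) (phiG a (-b) y)) ∧
      (∀ q : ℝ, ‖phiG a b q‖ = ‖phiG a (-b) q‖) ∧
      (∀ p : ℝ, ‖fourierT (phiG a b) p‖ = ‖fourierT (phiG a (-b)) p‖) := by
  refine ⟨?_, ?_, ?_⟩
  · intro h
    set x : ℝ := Real.sqrt (Real.pi / (2 * |b|)) with hx
    have hx2 : x ^ 2 = Real.pi / (2 * |b|) := by
      rw [hx, Real.sq_sqrt]
      positivity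
    have hC : (0:ℝ) < (2 * a / Real.pi) ^ ((1 : ℝ) / 4) := by
      apply Real.rpow_pos_of_pos
      positivity
    have h0 : phiG a b 0 = ((2 * a / Real.pi) ^ ((1 : ℝ) / 4) : ℝ) := by
      simp [phiG]
    have h0' : phiG a (-b) 0 = ((2 * a / Real.pi) ^ ((1 : ℝ) / 4) : ℝ) := by
      simp [phiG]
    have key := h x 0
    rw [h0, h0', Complex.conj_ofReal] at key
    have hCne : (((2 * a / Real.pi) ^ ((1 : ℝ) / 4) : ℝ) : ℂ) ≠ 0 := by
      exact_mod_cast hC.ne'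
    have key2 : phiG a b x = phiG a (-b) x := mul_right_cancel₀ hCne key
    unfold phiG at key2
    have key3 : Complex.exp (-(a + b * Complex.I) * (x : ℂ) ^ 2)
        = Complex.exp (-(a + (-b : ℝ) * Complex.I) * (x : ℂ) ^ 2) :=
      mul_left_cancel₀ hCne key2
    rw [Complex.exp_eq_exp_iff_exists_int] at key3
    obtain ⟨n, hn⟩ := key3
    have him := congrArg Complex.im hn
    simp only [Complex.add_im, Complex.mul_im, Complex.mul_re, Complex.add_re,
      Complex.neg_re, Complex.neg_im, Complex.ofReal_re, Complex.ofReal_im,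
      Complex.I_re, Complex.I_im, Complex.ofReal_pow, pow_two, Complex.mul_re,
      Complex.mul_im] at him
    ring_nf at him
    norm_num [Complex.intCast_re, Complex.intCast_im] at him
    -- him : -(b * x^2) = b * x^2 + n * 2π (some form)
    have hπ : (0:ℝ) < Real.pi := Real.pi_pos
    have hbx : b * x ^ 2 = b / |b| * (Real.pi / 2) := by
      rw [hx2]; field_simp
    rcases abs_cases b with ⟨hb1, _⟩ | ⟨hb1, _⟩
    · have hh : b * x ^ 2 = Real.pi / 2 := by
        rw [hbx, hb1]; field_simp
      have : ((2 * n : ℤ) : ℝ) = -1 := by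
        push_cast
        nlinarith [him, hh]
      have : (2 * n : ℤ) = -1 := by exact_mod_cast this
      omega
    · have hh : b * x ^ 2 = -(Real.pi / 2) := by
        rw [hbx, show |b| = -b from hb1]
        field_simp
      have : ((2 * n : ℤ) : ℝ) = 1 := by
        push_cast
        nlinarith [him, hh]
      have : (2 * n : ℤ) = 1 := by exact_mod_cast this
      omega
  · intro q
    rw [phiG_neg_b]
    exact (RCLike.norm_conj _).symm
  · intro p
    have : phiG a (-b) = fun q => (starRingEnd ℂ) (phiG a b q) := funext (phiG_neg_b a b)
    rw [this, fourierT_conj _ (phiG_even a b) p]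
    exact (RCLike.norm_conj _).symm
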